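/- arXiv:2410.15330 — 10 statements merged into one kernel-verified Lean document; each statement's English description precedes it below -/
import Mathlib

section
/- Let γ > 0 and let C₃ be a real number with C₃ ≤ γ, and let g(y) = γ/(1−y) − C₃y. Then g is strictly increasing on [0,1). Consequently, for each real C₂ there is at most one y ∈ (0,1) with (C₂−γ)y + (C₃−C₂)y² − C₃y³ = 0, i.e., the cubic model has at most one endemic equilibrium. -/
/-!
Writing `γ / (1 - y) - C₃ y = γ + γ y² / (1 - y) + (γ - C₃) y` exhibits the branch function as a
constant plus a strictly increasing term (as `γ > 0`) plus a nondecreasing one (as `C₃ ≤ γ`).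
For `y ∈ (0, 1)` the cubic factors as `y (1 - y) (C₂ - g y)`, so an endemic equilibrium is a
solution of `g y = C₂`, which is unique by injectivity of `g`.
-/

open Set

lemma strictMonoOn_sq_div_one_sub : StrictMonoOn (fun y : ℝ => y ^ 2 / (1 - y)) (Ico 0 1) := by
  rintro a ⟨ha0, -⟩ b ⟨-, hb1⟩ hab
  exact div_lt_div₀ (pow_lt_pow_left₀ hab ha0 two_ne_zero) (by linarith) (sq_nonneg b)
    (by linarith)

lemma div_one_sub_sub_mul_eq (γ C₃ : ℝ) {y : ℝ} (hy : y ≠ 1) :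
    γ / (1 - y) - C₃ * y = γ + γ * (y ^ 2 / (1 - y)) + (γ - C₃) * y := by
  field_simp [sub_ne_zero.mpr hy.symm]
  ring

theorem strictMonoOn_div_one_sub_sub_mul {γ C₃ : ℝ} (hγ : 0 < γ) (hC₃ : C₃ ≤ γ) :
    StrictMonoOn (fun y => γ / (1 - y) - C₃ * y) (Ico 0 1) := by
  have hsplit : StrictMonoOn (fun y => γ + γ * (y ^ 2 / (1 - y)) + (γ - C₃) * y) (Ico 0 1) :=
    (StrictMonoOn.const_add (fun a ha b hb hab =>
        mul_lt_mul_of_pos_left (strictMonoOn_sq_div_one_sub ha hb hab) hγ) γ).add_monotone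
      ((monotone_id.const_mul (sub_nonneg.2 hC₃)).monotoneOn _)
  exact hsplit.congr fun y hy => (div_one_sub_sub_mul_eq γ C₃ hy.2.ne).symm

lemma cubic_eq_mul_sub_branch (γ C₂ C₃ : ℝ) {y : ℝ} (hy : y ≠ 1) :
    (C₂ - γ) * y + (C₃ - C₂) * y ^ 2 - C₃ * y ^ 3 =
      y * (1 - y) * (C₂ - (γ / (1 - y) - C₃ * y)) := by
  field_simp [sub_ne_zero.mpr hy.symm]
  ring

lemma branch_eq_of_cubic_eq_zero {γ C₂ C₃ y : ℝ} (hy : y ∈ Ioo 0 1)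
    (h : (C₂ - γ) * y + (C₃ - C₂) * y ^ 2 - C₃ * y ^ 3 = 0) :
    γ / (1 - y) - C₃ * y = C₂ := by
  rw [cubic_eq_mul_sub_branch γ C₂ C₃ hy.2.ne] at h
  have hy₀ : y * (1 - y) ≠ 0 := mul_ne_zero hy.1.ne' (sub_ne_zero.mpr hy.2.ne')
  linarith [(mul_eq_zero.mp h).resolve_left hy₀]

/-- If `γ > 0` and `C₃ ≤ γ`, then `g(y) = γ/(1−y) − C₃y` is strictly
increasing on `[0,1)`; consequently for each `C₂` the cubic contagion model
`f(y) = (C₂−γ)y + (C₃−C₂)y² − C₃y³` has at most one endemic equilibrium in `(0,1)`. -/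
theorem cubic_at_most_one_endemic (γ C₃ : ℝ) (hγ : 0 < γ) (hC₃ : C₃ ≤ γ) (g : ℝ → ℝ)
    (hg : ∀ y : ℝ, g y = γ / (1 - y) - C₃ * y) :
    StrictMonoOn g (Set.Ico (0 : ℝ) 1) ∧
    ∀ C₂ : ℝ, ∀ y ∈ Set.Ioo (0 : ℝ) 1, ∀ y' ∈ Set.Ioo (0 : ℝ) 1,
      (C₂ - γ) * y + (C₃ - C₂) * y ^ 2 - C₃ * y ^ 3 = 0 →
      (C₂ - γ) * y' + (C₃ - C₂) * y' ^ 2 - C₃ * y' ^ 3 = 0 →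
      y = y' := by
  obtain rfl : g = fun y => γ / (1 - y) - C₃ * y := funext hg
  have hmono := strictMonoOn_div_one_sub_sub_mul hγ hC₃
  refine ⟨hmono, fun C₂ y hy y' hy' hf hf' => ?_⟩
  exact hmono.injOn (Ioo_subset_Ico_self hy) (Ioo_subset_Ico_self hy')
    ((branch_eq_of_cubic_eq_zero hy hf).trans (branch_eq_of_cubic_eq_zero hy' hf').symm)
end

section
/- Let 0 < γ < C₃ and let C₂ be a real number with 2√(γC₃) − C₃ < C₂ < γ. Then f(y) = (C₂−γ)y + (C₃−C₂)y² − C₃y³ has exactly two zeros y₁ < y₂ in the open interval (0,1), and moreover f′(0) < 0, f′(y₁) > 0 and f′(y₂) < 0; that is, the disease-free state 0 and the upper endemic equilibrium y₂ are both linearly stable while y₁ is unstable (bistability in the backward-bifurcation regime). -/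
/-!
Writing `s = √((C₂ + C₃)² - 4γC₃)`, the model factors as `f(y) = -C₃ y (y - y₁) (y - y₂)` with
`y₁,₂ = (C₃ - C₂ ∓ s) / (2C₃)`, the roots of `C₃y² - (C₃ - C₂)y + (γ - C₂)`. The lower bound on `C₂`
makes `s` real and positive, and `C₂ < γ` gives `s < C₃ - C₂`, so `0 < y₁ < y₂ < 1`. At the
root `r` of `(y - r) g(y)` the derivative is `g(r)`, which reads off the alternating signs
`f′(0) < 0 < f′(y₁)`, `f′(y₂) < 0`.
-/

open Real

theorem deriv_eq_of_eq_sub_mul {f g : ℝ → ℝ} {p : ℝ} (hfg : ∀ y, f y = (y - p) * g y)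
    (hg : DifferentiableAt ℝ g p) : deriv f p = g p := by
  have hf : HasDerivAt f (1 * g p + (p - p) * deriv g p) p := by
    rw [funext hfg]
    exact ((hasDerivAt_id p).sub_const p).mul hg.hasDerivAt
  simpa using hf.deriv

def rootCubic (a r₁ r₂ y : ℝ) : ℝ := a * y * (y - r₁) * (y - r₂)

section RootCubic

variable {a r₁ r₂ y : ℝ}

theorem rootCubic_eq_zero_iff :
    rootCubic a r₁ r₂ y = 0 ↔ a = 0 ∨ y = 0 ∨ y = r₁ ∨ y = r₂ := by
  simp only [rootCubic, mul_eq_zero, sub_eq_zero, or_assoc]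

theorem rootCubic_left : rootCubic a r₁ r₂ r₁ = 0 := by
  simp [rootCubic]

theorem rootCubic_right : rootCubic a r₁ r₂ r₂ = 0 := by
  simp [rootCubic]

theorem deriv_rootCubic_zero : deriv (rootCubic a r₁ r₂) 0 = a * r₁ * r₂ := by
  rw [deriv_eq_of_eq_sub_mul (g := fun y ↦ a * (y - r₁) * (y - r₂))
    (fun y ↦ by simp only [rootCubic]; ring) (by fun_prop)]
  ring

theorem deriv_rootCubic_left : deriv (rootCubic a r₁ r₂) r₁ = a * r₁ * (r₁ - r₂) :=
  deriv_eq_of_eq_sub_mul (g := fun y ↦ a * y * (y - r₂))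
    (fun y ↦ by simp only [rootCubic]; ring) (by fun_prop)

theorem deriv_rootCubic_right : deriv (rootCubic a r₁ r₂) r₂ = a * r₂ * (r₂ - r₁) :=
  deriv_eq_of_eq_sub_mul (g := fun y ↦ a * y * (y - r₁))
    (fun y ↦ by simp only [rootCubic]; ring) (by fun_prop)

end RootCubic

section Contagion

variable {γ C₂ C₃ : ℝ}

theorem contagion_eq_rootCubic {s : ℝ} (hC₃ : C₃ ≠ 0) (hs : s ^ 2 = (C₂ + C₃) ^ 2 - 4 * γ * C₃)
    (y : ℝ) :
    (C₂ - γ) * y + (C₃ - C₂) * y ^ 2 - C₃ * y ^ 3 =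
      rootCubic (-C₃) ((C₃ - C₂ - s) / (2 * C₃)) ((C₃ - C₂ + s) / (2 * C₃)) y := by
  simp only [rootCubic]
  field_simp
  linear_combination (-y) * hs

theorem exists_contagion_eq_rootCubic (hγ : 0 < γ) (hγC₃ : γ < C₃)
    (hlo : 2 * √(γ * C₃) - C₃ < C₂) (hhi : C₂ < γ) :
    ∃ y₁ y₂ : ℝ, 0 < y₁ ∧ y₁ < y₂ ∧ y₂ < 1 ∧
      ∀ y, (C₂ - γ) * y + (C₃ - C₂) * y ^ 2 - C₃ * y ^ 3 = rootCubic (-C₃) y₁ y₂ y := by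
  have hC₃ : 0 < C₃ := hγ.trans hγC₃
  have hroot : √(γ * C₃) ^ 2 = γ * C₃ := sq_sqrt (by positivity)
  have hC₂C₃ : 2 * √(γ * C₃) < C₂ + C₃ := by linarith
  have hD : 0 < (C₂ + C₃) ^ 2 - 4 * γ * C₃ := by nlinarith [sqrt_nonneg (γ * C₃)]
  set s := √((C₂ + C₃) ^ 2 - 4 * γ * C₃)
  have hs : s ^ 2 = (C₂ + C₃) ^ 2 - 4 * γ * C₃ := sq_sqrt hD.le
  have hs₀ : 0 < s := sqrt_pos.2 hD
  have hsC₂ : s < C₃ - C₂ := by nlinarith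
  have hsC₂' : s < C₃ + C₂ := by nlinarith [sqrt_nonneg (γ * C₃), mul_pos hγ hC₃]
  refine ⟨(C₃ - C₂ - s) / (2 * C₃), (C₃ - C₂ + s) / (2 * C₃), div_pos (by linarith) (by positivity),
    by gcongr; linarith, (div_lt_one (by positivity)).2 (by linarith),
    contagion_eq_rootCubic hC₃.ne' hs⟩

end Contagion

/-- In the backward-bifurcation regime `0 < γ < C₃` with
`2√(γC₃) − C₃ < C₂ < γ`, the cubic contagion model
`f(y) = (C₂−γ)y + (C₃−C₂)y² − C₃y³` has exactly two zeros `y₁ < y₂` in `(0,1)`,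
with `f′(0) < 0`, `f′(y₁) > 0` and `f′(y₂) < 0` (bistability between the
disease-free state and the upper endemic state). -/
theorem cubic_bistability (γ C₂ C₃ : ℝ) (hγ : 0 < γ) (hγC₃ : γ < C₃)
    (hlo : 2 * Real.sqrt (γ * C₃) - C₃ < C₂) (hhi : C₂ < γ) (f : ℝ → ℝ)
    (hf : ∀ y : ℝ, f y = (C₂ - γ) * y + (C₃ - C₂) * y ^ 2 - C₃ * y ^ 3) :
    ∃ y₁ y₂ : ℝ, y₁ ∈ Set.Ioo (0 : ℝ) 1 ∧ y₂ ∈ Set.Ioo (0 : ℝ) 1 ∧ y₁ < y₂ ∧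
      f y₁ = 0 ∧ f y₂ = 0 ∧
      (∀ y ∈ Set.Ioo (0 : ℝ) 1, f y = 0 → y = y₁ ∨ y = y₂) ∧
      deriv f 0 < 0 ∧ deriv f y₁ > 0 ∧ deriv f y₂ < 0 := by
  have hC₃ : 0 < C₃ := hγ.trans hγC₃
  obtain ⟨y₁, y₂, hy₁, hy₁₂, hy₂, hfac⟩ := exists_contagion_eq_rootCubic hγ hγC₃ hlo hhi
  obtain rfl : f = rootCubic (-C₃) y₁ y₂ := funext fun y ↦ (hf y).trans (hfac y)
  refine ⟨y₁, y₂, ⟨hy₁, hy₁₂.trans hy₂⟩, ⟨hy₁.trans hy₁₂, hy₂⟩, hy₁₂, rootCubic_left,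
    rootCubic_right, fun y hy h ↦ ?_, ?_, ?_, ?_⟩
  · simpa [rootCubic_eq_zero_iff, hC₃.ne', hy.1.ne'] using h
  · rw [deriv_rootCubic_zero]
    nlinarith [mul_pos hC₃ (mul_pos hy₁ (hy₁.trans hy₁₂))]
  · rw [deriv_rootCubic_left]
    nlinarith [mul_pos hC₃ (mul_pos hy₁ (sub_pos.2 hy₁₂))]
  · rw [deriv_rootCubic_right]
    nlinarith [mul_pos hC₃ (mul_pos (hy₁.trans hy₁₂) (sub_pos.2 hy₁₂))]
end

section
/- Let γ, C₂, C₃ be real numbers, let f(y) = (C₂−γ)y + (C₃−C₂)y² − C₃y³, and let y ∈ (0,1) satisfy C₂ = γ/(1−y) − C₃y (so that f(y) = 0). Then f′(y) = y(C₃(1−y)² − γ)/(1−y). In particular, the endemic equilibrium y is linearly stable (f′(y) < 0) if and only if C₃(1−y)² < γ. -/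
/-!
On the endemic branch the linear coefficient is `C₂ - γ = γ y/(1 - y) - C₃ y`, and substituting
it into `f′(y) = (C₂ - γ) + 2(C₃ - C₂)y - 3C₃y²` collapses the derivative to
`y(C₃(1 - y)² - γ)/(1 - y)`. For `y ∈ (0, 1)` the factor `y/(1 - y)` is positive, so the sign
of `f′(y)` is that of `C₃(1 - y)² - γ`.
-/

def cubicContagion (γ C₂ C₃ : ℝ) (y : ℝ) : ℝ :=
  (C₂ - γ) * y + (C₃ - C₂) * y ^ 2 - C₃ * y ^ 3

theorem hasDerivAt_cubicContagion (γ C₂ C₃ y : ℝ) :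
    HasDerivAt (cubicContagion γ C₂ C₃)
      ((C₂ - γ) + 2 * (C₃ - C₂) * y - 3 * C₃ * y ^ 2) y := by
  have h := (((hasDerivAt_id y).const_mul (C₂ - γ)).add
    ((hasDerivAt_pow 2 y).const_mul (C₃ - C₂))).sub ((hasDerivAt_pow 3 y).const_mul C₃)
  exact h.congr_deriv (by ring)

theorem cubicContagion_deriv_eq_of_endemic {γ C₂ C₃ y : ℝ} (hy : y ≠ 1)
    (hbranch : C₂ = γ / (1 - y) - C₃ * y) :
    (C₂ - γ) + 2 * (C₃ - C₂) * y - 3 * C₃ * y ^ 2 = y * (C₃ * (1 - y) ^ 2 - γ) / (1 - y) := by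
  have hne : 1 - y ≠ 0 := sub_ne_zero.mpr hy.symm
  subst hbranch
  field_simp
  ring

theorem mul_div_one_sub_neg_iff {y a : ℝ} (hy : y ∈ Set.Ioo (0 : ℝ) 1) :
    y * a / (1 - y) < 0 ↔ a < 0 := by
  have hpos : 0 < y / (1 - y) := div_pos hy.1 (sub_pos.mpr hy.2)
  rw [mul_div_right_comm]
  simpa only [mul_zero] using mul_lt_mul_iff_of_pos_left (b := a) (c := 0) hpos

/-- If `y ∈ (0,1)` lies on the endemic branch
`C₂ = γ/(1−y) − C₃y` of the cubic contagion model
`f(y) = (C₂−γ)y + (C₃−C₂)y² − C₃y³`, then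
`f′(y) = y(C₃(1−y)² − γ)/(1−y)`; in particular `f′(y) < 0` iff `C₃(1−y)² < γ`. -/
theorem cubic_endemic_stability (γ C₂ C₃ : ℝ) (f : ℝ → ℝ)
    (hf : ∀ y : ℝ, f y = (C₂ - γ) * y + (C₃ - C₂) * y ^ 2 - C₃ * y ^ 3)
    (y : ℝ) (hy : y ∈ Set.Ioo (0 : ℝ) 1)
    (hbranch : C₂ = γ / (1 - y) - C₃ * y) :
    deriv f y = y * (C₃ * (1 - y) ^ 2 - γ) / (1 - y) ∧
    (deriv f y < 0 ↔ C₃ * (1 - y) ^ 2 < γ) := by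
  have hf' : f = cubicContagion γ C₂ C₃ := funext hf
  have hderiv : deriv f y = y * (C₃ * (1 - y) ^ 2 - γ) / (1 - y) := by
    rw [hf', (hasDerivAt_cubicContagion γ C₂ C₃ y).deriv]
    exact cubicContagion_deriv_eq_of_endemic hy.2.ne hbranch
  refine ⟨hderiv, ?_⟩
  rw [hderiv, mul_div_one_sub_neg_iff hy, sub_neg]
end

section
/- Let γ > 0 and let C₃, C₄ be real numbers with C₃ < γ and C₄ < γ, and let h(y) = γ/(1−y) − C₃y − C₄y². Then h′(y) > 0 for all y ∈ [0,1), so h is strictly increasing on [0,1); consequently, for each real C₂ the quartic model has at most one endemic equilibrium in (0,1), and the bifurcation curve C₂ = h(y) has no fold point. -/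
/-- If `γ > 0`, `C₃ < γ` and `C₄ < γ`, then the nontrivial-branch
function `h(y) = γ/(1−y) − C₃y − C₄y²` of the quartic contagion model satisfies
`h′ > 0` on `[0,1)`, hence is strictly increasing there; consequently for each `C₂`
the quartic model has at most one endemic equilibrium in `(0,1)` and the bifurcation
curve `C₂ = h(y)` has no fold point. -/
theorem quartic_no_fold (γ C₃ C₄ : ℝ) (hγ : 0 < γ) (h3 : C₃ < γ) (h4 : C₄ < γ)
    (h : ℝ → ℝ) (hh : ∀ y : ℝ, h y = γ / (1 - y) - C₃ * y - C₄ * y ^ 2) :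
    (∀ y ∈ Set.Ico (0 : ℝ) 1, 0 < deriv h y) ∧
    StrictMonoOn h (Set.Ico (0 : ℝ) 1) ∧
    (∀ C₂ : ℝ, ∀ y ∈ Set.Ioo (0 : ℝ) 1, ∀ y' ∈ Set.Ioo (0 : ℝ) 1,
      (C₂ - γ) * y + (C₃ - C₂) * y ^ 2 + (C₄ - C₃) * y ^ 3 - C₄ * y ^ 4 = 0 →
      (C₂ - γ) * y' + (C₃ - C₂) * y' ^ 2 + (C₄ - C₃) * y' ^ 3 - C₄ * y' ^ 4 = 0 →
      y = y') ∧
    (∀ y ∈ Set.Ioo (0 : ℝ) 1, deriv h y ≠ 0) := by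
  have hfun : h = fun y => γ / (1 - y) - C₃ * y - C₄ * y ^ 2 := funext hh
  have key : ∀ y : ℝ, y < 1 → HasDerivAt h (γ / (1 - y) ^ 2 - C₃ - 2 * C₄ * y) y := by
    intro y hy
    have h1 : (1 : ℝ) - y ≠ 0 := ne_of_gt (by linarith)
    have hd1 : HasDerivAt (fun x : ℝ => 1 - x) (-1) y := (hasDerivAt_id y).const_sub 1
    have hd2 : HasDerivAt (fun x : ℝ => γ / (1 - x)) (γ / (1 - y) ^ 2) y := by
      have := (hd1.inv h1).const_mul γ
      refine this.congr_deriv ?_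
      field_simp
    have hd3 : HasDerivAt (fun x : ℝ => C₃ * x) C₃ y := by
      simpa using (hasDerivAt_id y).const_mul C₃
    have hd4 : HasDerivAt (fun x : ℝ => C₄ * x ^ 2) (2 * C₄ * y) y := by
      have := ((hasDerivAt_pow 2 y)).const_mul C₄
      refine this.congr_deriv ?_
      ring
    rw [hfun]
    have := (hd2.sub hd3).sub hd4
    exact this
  have pos : ∀ y ∈ Set.Ico (0 : ℝ) 1, 0 < γ / (1 - y) ^ 2 - C₃ - 2 * C₄ * y := by
    rintro y ⟨hy0, hy1⟩
    have ht : (0 : ℝ) < (1 - y) ^ 2 := pow_pos (by linarith) 2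
    have hlt : (C₃ + 2 * C₄ * y) * (1 - y) ^ 2 < γ := by
      nlinarith [mul_pos (sub_pos.2 h3) ht, mul_nonneg (mul_nonneg (sub_pos.2 h4).le hy0) ht.le,
        mul_nonneg (mul_nonneg hγ.le (sq_nonneg y)) (by linarith : (0:ℝ) ≤ 3 - 2 * y)]
    have := (lt_div_iff₀ ht).2 hlt
    linarith
  have derivEq : ∀ y : ℝ, y < 1 → deriv h y = γ / (1 - y) ^ 2 - C₃ - 2 * C₄ * y :=
    fun y hy => (key y hy).deriv
  have part1 : ∀ y ∈ Set.Ico (0 : ℝ) 1, 0 < deriv h y := by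
    intro y hy
    rw [derivEq y hy.2]
    exact pos y hy
  have part2 : StrictMonoOn h (Set.Ico (0 : ℝ) 1) := by
    apply strictMonoOn_of_deriv_pos (convex_Ico 0 1)
    · intro y hy
      exact (key y hy.2).continuousAt.continuousWithinAt
    · intro y hy
      rw [interior_Ico] at hy
      exact part1 y ⟨hy.1.le, hy.2⟩
  refine ⟨part1, part2, ?_, fun y hy => (part1 y ⟨hy.1.le, hy.2⟩).ne'⟩
  intro C₂ y hy y' hy' he he'
  have hval : ∀ z ∈ Set.Ioo (0 : ℝ) 1,
      (C₂ - γ) * z + (C₃ - C₂) * z ^ 2 + (C₄ - C₃) * z ^ 3 - C₄ * z ^ 4 = 0 → h z = C₂ := by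
    rintro z ⟨hz0, hz1⟩ hz
    have h1 : (1 : ℝ) - z ≠ 0 := ne_of_gt (by linarith)
    rw [hh]
    field_simp
    nlinarith [hz, hz0.ne', sq_nonneg z]
  have := part2.injOn (Set.Ioo_subset_Ico_self hy) (Set.Ioo_subset_Ico_self hy')
  exact this (by rw [hval y hy he, hval y' hy' he'])
end

section
/- Let 0 < γ < C₃ and let C₄ be any real number. Then there exists ε > 0 such that for every real C₂ with γ − ε < C₂ < γ, the function f(y) = (C₂−γ)y + (C₃−C₂)y² + (C₄−C₃)y³ − C₄y⁴ has at least two distinct zeros in the open interval (0,1), while f′(0) = C₂ − γ < 0 (so the stable disease-free state coexists with endemic equilibria: backward bifurcation with bistability). -/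
set_option maxHeartbeats 1000000


/-- If `0 < γ < C₃` (and `C₄` is arbitrary), then there is `ε > 0`
such that for all `C₂` with `γ − ε < C₂ < γ`, the quartic contagion model
`f_{C₂}(y) = (C₂−γ)y + (C₃−C₂)y² + (C₄−C₃)y³ − C₄y⁴` has at least two distinct zeros
in `(0,1)` while `f_{C₂}′(0) = C₂ − γ < 0`: backward bifurcation with bistability. -/
theorem quartic_backward_bistability (γ C₃ C₄ : ℝ) (hγ : 0 < γ) (hγC₃ : γ < C₃)
    (f : ℝ → ℝ → ℝ)
    (hf : ∀ C₂ y : ℝ,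
      f C₂ y = (C₂ - γ) * y + (C₃ - C₂) * y ^ 2 + (C₄ - C₃) * y ^ 3 - C₄ * y ^ 4) :
    ∃ ε > (0 : ℝ), ∀ C₂ : ℝ, γ - ε < C₂ → C₂ < γ →
      (∃ z₁ z₂ : ℝ, z₁ ∈ Set.Ioo (0 : ℝ) 1 ∧ z₂ ∈ Set.Ioo (0 : ℝ) 1 ∧ z₁ ≠ z₂ ∧
        f C₂ z₁ = 0 ∧ f C₂ z₂ = 0) ∧
      deriv (f C₂) 0 = C₂ - γ ∧ C₂ - γ < 0 := by
  have hCγ : 0 < C₃ - γ := sub_pos.mpr hγC₃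
  set M : ℝ := |C₄ - C₃| + |C₄| + 1 with hM
  have hM0 : 0 < M := by positivity
  set a : ℝ := min (1/2) ((C₃ - γ)/(2*M)) with ha
  have ha0 : 0 < a := lt_min (by norm_num) (by positivity)
  have ha1 : a < 1 := lt_of_le_of_lt (min_le_left _ _) (by norm_num)
  have haM : M * a ≤ (C₃ - γ)/2 := by
    have h : a ≤ (C₃ - γ)/(2*M) := min_le_right _ _
    have := mul_le_mul_of_nonneg_left h hM0.le
    calc M * a ≤ M * ((C₃ - γ)/(2*M)) := this
      _ = (C₃ - γ)/2 := by field_simp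
  refine ⟨a*(C₃-γ)/4, by positivity, fun C₂ h1 h2 => ?_⟩
  have hC2 : C₂ - γ < 0 := sub_neg.mpr h2
  have hε : -(a*(C₃-γ)/4) < C₂ - γ := by linarith
  set g : ℝ → ℝ := fun y => (C₂ - γ) + (C₃ - C₂)*y + (C₄ - C₃)*y^2 - C₄*y^3 with hg
  have hgc : Continuous g := by fun_prop
  have hfg : ∀ y, f C₂ y = y * g y := by
    intro y; rw [hf]; simp only [hg]; ring
  have hg0 : g 0 < 0 := by simp only [hg]; norm_num; linarith
  have hg1 : g 1 < 0 := by
    have : g 1 = -γ := by simp only [hg]; ring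
    rw [this]; linarith
  have hga : 0 < g a := by
    have hb1 : -|C₄ - C₃| ≤ C₄ - C₃ := neg_abs_le _
    have hb2 : -|C₄| ≤ -C₄ := by
      have := le_abs_self C₄; linarith
    have ha2 : a^2 ≤ a := by nlinarith
    have ha3 : a^3 ≤ a^2 := by nlinarith
    have key : g a = (C₃ - γ)*a + (C₄ - C₃)*a^2 - C₄*a^3 + (C₂ - γ)*(1 - a) := by
      simp only [hg]; ring
    have h4 : (C₄ - C₃)*a^2 ≥ -|C₄ - C₃| * a^2 := by nlinarith
    have h5 : -C₄*a^3 ≥ -|C₄| * a^2 := by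
      have hA : (0:ℝ) ≤ |C₄| - C₄ := by linarith [le_abs_self C₄]
      have h5a : 0 ≤ (|C₄| - C₄) * a^3 := mul_nonneg hA (by positivity)
      have h5b : 0 ≤ |C₄| * (a^2 - a^3) := mul_nonneg (abs_nonneg _) (by linarith)
      nlinarith
    have h6 : (C₂ - γ)*(1 - a) ≥ -(a*(C₃-γ)/4) := by nlinarith
    have h7 : (|C₄ - C₃| + |C₄|) * a^2 ≤ (C₃ - γ)/2 * a := by nlinarith [abs_nonneg (C₄ - C₃), abs_nonneg C₄]
    nlinarith
  obtain ⟨z₁, hz₁, hz₁0⟩ := intermediate_value_Ioo ha0.le hgc.continuousOn ⟨hg0, hga⟩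
  obtain ⟨z₂, hz₂, hz₂0⟩ := intermediate_value_Ioo' ha1.le hgc.continuousOn ⟨hg1, hga⟩
  refine ⟨⟨z₁, z₂, ⟨hz₁.1, hz₁.2.trans ha1⟩, ⟨ha0.trans hz₂.1, hz₂.2⟩,
    ne_of_lt (hz₁.2.trans hz₂.1), by rw [hfg, hz₁0, mul_zero], by rw [hfg, hz₂0, mul_zero]⟩,
    ?_, hC2⟩
  have hfun : f C₂ = fun y => (C₂ - γ) * y + (C₃ - C₂) * y ^ 2 + (C₄ - C₃) * y ^ 3 - C₄ * y ^ 4 :=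
    funext (hf C₂)
  rw [hfun]
  have hd : HasDerivAt (fun y : ℝ => (C₂ - γ) * y + (C₃ - C₂) * y ^ 2 + (C₄ - C₃) * y ^ 3 - C₄ * y ^ 4)
      ((C₂ - γ) * 1 + (C₃ - C₂) * (2 * 0 ^ 1) + (C₄ - C₃) * (3 * 0 ^ 2) - C₄ * (4 * 0 ^ 3)) 0 := by
    exact ((((hasDerivAt_id (0:ℝ)).const_mul (C₂ - γ)).add
      ((hasDerivAt_pow 2 (0:ℝ)).const_mul (C₃ - C₂))).add
      ((hasDerivAt_pow 3 (0:ℝ)).const_mul (C₄ - C₃))).sub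
      ((hasDerivAt_pow 4 (0:ℝ)).const_mul C₄)
  have := hd.deriv
  rw [this]; norm_num
end

section
/- Let γ, C₃, C₄ be real numbers with C₃ < γ < C₄, γ > 0, and 3γ^{1/3}C₄^{2/3} < C₃ + 2C₄, and let h(y) = γ/(1−y) − C₃y − C₄y². Then h′ has exactly two zeros a < b in (0,1), with h′ > 0 on [0,a), h′ < 0 on (a,b) and h′ > 0 on (b,1); moreover h(a) > γ and h(a) > h(b), and for every real C₂ with max(γ, h(b)) < C₂ < h(a), the function f(y) = (C₂−γ)y + (C₃−C₂)y² + (C₄−C₃)y³ − C₄y⁴ has exactly three zeros z₁ < z₂ < z₃ in (0,1), satisfying f′(0) > 0, f′(z₁) < 0, f′(z₂) > 0 and f′(z₃) < 0 (multistability between two endemic steady states). -/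
set_option maxHeartbeats 2000000


/-- Multistability between two endemic states in the quartic
contagion model. Assume `C₃ < γ < C₄`, `γ > 0` and `3γ^{1/3}C₄^{2/3} < C₃ + 2C₄`,
and let `h(y) = γ/(1−y) − C₃y − C₄y²` be the nontrivial-branch function. Then `h′`
has exactly two zeros `a < b` in `(0,1)`, positive on `[0,a)`, negative on `(a,b)`
and positive on `(b,1)`; moreover `h(a) > γ`, `h(a) > h(b)`, and for every `C₂` with
`max(γ, h(b)) < C₂ < h(a)` the model `f_{C₂}` has exactly three zeros
`z₁ < z₂ < z₃` in `(0,1)` with `f′(0) > 0`, `f′(z₁) < 0`, `f′(z₂) > 0`, `f′(z₃) < 0`. -/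
theorem quartic_multistability (γ C₃ C₄ : ℝ) (hγ : 0 < γ) (h3 : C₃ < γ) (h4 : γ < C₄)
    (hcond : 3 * γ ^ ((1 : ℝ) / 3) * C₄ ^ ((2 : ℝ) / 3) < C₃ + 2 * C₄)
    (h : ℝ → ℝ) (hh : ∀ y : ℝ, h y = γ / (1 - y) - C₃ * y - C₄ * y ^ 2)
    (f : ℝ → ℝ → ℝ)
    (hf : ∀ C₂ y : ℝ,
      f C₂ y = (C₂ - γ) * y + (C₃ - C₂) * y ^ 2 + (C₄ - C₃) * y ^ 3 - C₄ * y ^ 4) :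
    ∃ a b : ℝ, a ∈ Set.Ioo (0 : ℝ) 1 ∧ b ∈ Set.Ioo (0 : ℝ) 1 ∧ a < b ∧
      deriv h a = 0 ∧ deriv h b = 0 ∧
      (∀ y ∈ Set.Ico (0 : ℝ) a, 0 < deriv h y) ∧
      (∀ y ∈ Set.Ioo a b, deriv h y < 0) ∧
      (∀ y ∈ Set.Ioo b 1, 0 < deriv h y) ∧
      h a > γ ∧ h a > h b ∧
      (∀ C₂ : ℝ, max γ (h b) < C₂ → C₂ < h a →
        ∃ z₁ z₂ z₃ : ℝ, z₁ ∈ Set.Ioo (0 : ℝ) 1 ∧ z₂ ∈ Set.Ioo (0 : ℝ) 1 ∧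
          z₃ ∈ Set.Ioo (0 : ℝ) 1 ∧ z₁ < z₂ ∧ z₂ < z₃ ∧
          f C₂ z₁ = 0 ∧ f C₂ z₂ = 0 ∧ f C₂ z₃ = 0 ∧
          (∀ y ∈ Set.Ioo (0 : ℝ) 1, f C₂ y = 0 → y = z₁ ∨ y = z₂ ∨ y = z₃) ∧
          0 < deriv (f C₂) 0 ∧ deriv (f C₂) z₁ < 0 ∧
          0 < deriv (f C₂) z₂ ∧ deriv (f C₂) z₃ < 0) := by
  have hC4 : 0 < C₄ := hγ.trans h4
  have hrpos : 0 < 3 * γ ^ ((1:ℝ)/3) * C₄ ^ ((2:ℝ)/3) := by positivity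
  have hs : 0 < C₃ + 2 * C₄ := hrpos.trans hcond
  have hcube : 27 * γ * C₄ ^ 2 < (C₃ + 2 * C₄) ^ 3 := by
    have h1 : (3 * γ ^ ((1:ℝ)/3) * C₄ ^ ((2:ℝ)/3)) ^ 3 = 27 * γ * C₄ ^ 2 := by
      rw [mul_pow, mul_pow, ← Real.rpow_natCast (γ ^ ((1:ℝ)/3)) 3,
        ← Real.rpow_natCast (C₄ ^ ((2:ℝ)/3)) 3, ← Real.rpow_mul hγ.le, ← Real.rpow_mul hC4.le]
      norm_num [Real.rpow_two]
    calc 27 * γ * C₄ ^ 2 = (3 * γ ^ ((1:ℝ)/3) * C₄ ^ ((2:ℝ)/3)) ^ 3 := h1.symm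
      _ < (C₃ + 2 * C₄) ^ 3 := by
          exact pow_lt_pow_left₀ hcond hrpos.le (by norm_num)
  set m : ℝ := (C₄ - C₃) / (3 * C₄) with hmdef
  have hm0 : 0 < m := div_pos (by linarith) (by linarith)
  have hm1 : m < 1 := by
    rw [hmdef, div_lt_one (by linarith)]; linarith
  set G : ℝ → ℝ := fun y => γ - (1 - y)^2 * (C₃ + 2 * C₄ * y) with hGdef
  have hGval : ∀ y, G y = γ - (1 - y)^2 * (C₃ + 2 * C₄ * y) := fun _ => rfl
  have hGc : Continuous G := by
    rw [hGdef]; continuity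
  have hGd : ∀ y, HasDerivAt G (2 * (1 - y) * (3 * C₄ * y - (C₄ - C₃))) y := by
    intro y
    have d1 : HasDerivAt (fun y : ℝ => (1 - y)^2) (-2*(1-y)) y := by
      have := ((hasDerivAt_id y).const_sub 1).pow 2
      refine this.congr_deriv ?_; simp [id]
    have d2 : HasDerivAt (fun y : ℝ => C₃ + 2 * C₄ * y) (2 * C₄) y := by
      simpa using ((hasDerivAt_id y).const_mul (2*C₄)).const_add C₃
    have := (d1.mul d2).const_sub γ
    refine this.congr_deriv ?_; ring
  have hGanti : StrictAntiOn G (Set.Icc 0 m) := by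
    apply strictAntiOn_of_deriv_neg (convex_Icc 0 m) hGc.continuousOn
    intro y hy
    rw [interior_Icc] at hy
    rw [(hGd y).deriv]
    have h1y : 0 < 1 - y := by linarith [hy.2.trans hm1]
    have : 3 * C₄ * y < C₄ - C₃ := by
      calc 3 * C₄ * y < 3 * C₄ * m := by
            apply mul_lt_mul_of_pos_left hy.2 (by linarith)
        _ = C₄ - C₃ := by rw [hmdef]; field_simp
    exact mul_neg_of_pos_of_neg (by linarith) (by linarith)
  have hGmono : StrictMonoOn G (Set.Icc m 1) := by
    apply strictMonoOn_of_deriv_pos (convex_Icc m 1) hGc.continuousOn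
    intro y hy
    rw [interior_Icc] at hy
    rw [(hGd y).deriv]
    have h1y : 0 < 1 - y := by linarith [hy.2]
    have : C₄ - C₃ < 3 * C₄ * y := by
      calc C₄ - C₃ = 3 * C₄ * m := by rw [hmdef]; field_simp
        _ < 3 * C₄ * y := by apply mul_lt_mul_of_pos_left hy.1 (by linarith)
    exact mul_pos (by linarith) (by linarith)
  have hG0 : 0 < G 0 := by rw [hGval]; norm_num; linarith
  have hG1 : 0 < G 1 := by rw [hGval]; norm_num; linarith
  have hGm : G m < 0 := by
    have e : G m = (27 * γ * C₄ ^ 2 - (C₃ + 2 * C₄) ^ 3) / (27 * C₄ ^ 2) := by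
      rw [hGval, hmdef]; field_simp; ring
    rw [e]
    apply div_neg_of_neg_of_pos (by linarith) (by positivity)
  -- the zero a of G in (0, m)
  obtain ⟨a, haIoo, hGa⟩ : ∃ a ∈ Set.Ioo 0 m, G a = 0 := by
    have := intermediate_value_Ioo' hm0.le hGc.continuousOn (a := 0) (b := m)
    have h0 : (0:ℝ) ∈ Set.Ioo (G m) (G 0) := ⟨hGm, hG0⟩
    obtain ⟨a, ha, hGa⟩ := this h0
    exact ⟨a, ha, hGa⟩
  obtain ⟨b, hbIoo, hGb⟩ : ∃ b ∈ Set.Ioo m 1, G b = 0 := by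
    have := intermediate_value_Ioo hm1.le hGc.continuousOn (a := m) (b := 1)
    have h0 : (0:ℝ) ∈ Set.Ioo (G m) (G 1) := ⟨hGm, hG1⟩
    obtain ⟨b, hb, hGb⟩ := this h0
    exact ⟨b, hb, hGb⟩
  have ha0 : 0 < a := haIoo.1
  have ham : a < m := haIoo.2
  have hmb : m < b := hbIoo.1
  have hb1 : b < 1 := hbIoo.2
  have hab : a < b := ham.trans hmb
  have ha1 : a < 1 := hab.trans hb1
  have hb0 : 0 < b := ha0.trans hab
  -- sign of G
  have hGposlow : ∀ y, 0 ≤ y → y < a → 0 < G y := by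
    intro y h0 hya
    have := hGanti ⟨h0, (hya.trans ham).le⟩ ⟨h0.trans hya.le, ham.le⟩ hya
    rw [hGa] at this; exact this
  have hGneg : ∀ y, a < y → y < b → G y < 0 := by
    intro y hay hyb
    rcases le_or_gt y m with hym | hmy
    · have := hGanti ⟨ha0.le, ham.le⟩ ⟨(ha0.trans hay).le, hym⟩ hay
      rw [hGa] at this; exact this
    · have := hGmono ⟨hmy.le, (hyb.trans hb1).le⟩ ⟨hmb.le, hb1.le⟩ hyb
      rw [hGb] at this; exact this
  have hGposhigh : ∀ y, b < y → y ≤ 1 → 0 < G y := by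
    intro y hby hy1
    have := hGmono ⟨hmb.le, hb1.le⟩ ⟨(hmb.trans hby).le, hy1⟩ hby
    rw [hGb] at this; exact this
  -- derivative of h
  have hhd : ∀ y, y < 1 → HasDerivAt h (G y / (1 - y)^2) y := by
    intro y hy
    have hne : (1:ℝ) - y ≠ 0 := ne_of_gt (by linarith)
    have e : h = fun y => γ / (1 - y) - C₃ * y - C₄ * y ^ 2 := funext hh
    rw [e]
    have d0 : HasDerivAt (fun y:ℝ => 1 - y) (-1) y := by
      simpa using (hasDerivAt_id y).const_sub 1
    have d1 : HasDerivAt (fun y : ℝ => γ / (1 - y)) (γ / (1 - y)^2) y := by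
      have := (hasDerivAt_const y γ).div d0 hne
      refine this.congr_deriv ?_
      field_simp
      ring
    have d2 : HasDerivAt (fun y : ℝ => C₃ * y) C₃ y := by
      simpa using (hasDerivAt_id y).const_mul C₃
    have d3 : HasDerivAt (fun y : ℝ => C₄ * y ^ 2) (C₄ * (2 * y)) y := by
      have := (hasDerivAt_pow 2 y).const_mul C₄
      refine this.congr_deriv ?_; simp
    have := (d1.sub d2).sub d3
    refine this.congr_deriv ?_
    rw [hGval]
    field_simp
    ring
  have hderiv : ∀ y, y < 1 → deriv h y = G y / (1 - y)^2 := fun y hy => (hhd y hy).deriv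
  have hcont : ContinuousOn h (Set.Iio 1) := by
    intro y hy
    exact ((hhd y hy).continuousAt).continuousWithinAt
  -- monotonicity of h
  have hsub1 : Set.Icc 0 a ⊆ Set.Iio 1 := fun y hy => lt_of_le_of_lt hy.2 ha1
  have hsub2 : Set.Icc a b ⊆ Set.Iio 1 := fun y hy => lt_of_le_of_lt hy.2 hb1
  have hsub3 : Set.Ico b 1 ⊆ Set.Iio 1 := fun y hy => hy.2
  have hmono1 : StrictMonoOn h (Set.Icc 0 a) := by
    apply strictMonoOn_of_deriv_pos (convex_Icc 0 a) (hcont.mono hsub1)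
    intro y hy
    rw [interior_Icc] at hy
    rw [hderiv y (hy.2.trans ha1)]
    exact div_pos (hGposlow y hy.1.le hy.2) (pow_pos (by linarith [hy.2.trans ha1]) 2)
  have hanti : StrictAntiOn h (Set.Icc a b) := by
    apply strictAntiOn_of_deriv_neg (convex_Icc a b) (hcont.mono hsub2)
    intro y hy
    rw [interior_Icc] at hy
    rw [hderiv y (hy.2.trans hb1)]
    have hg := hGneg y hy.1 hy.2
    have hp : (0:ℝ) < (1 - y)^2 := pow_pos (by linarith [hy.2.trans hb1]) 2
    exact div_neg_of_neg_of_pos hg hp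
  have hmono2 : StrictMonoOn h (Set.Ico b 1) := by
    apply strictMonoOn_of_deriv_pos (convex_Ico b 1) (hcont.mono hsub3)
    intro y hy
    rw [interior_Ico] at hy
    rw [hderiv y hy.2]
    exact div_pos (hGposhigh y hy.1 hy.2.le) (pow_pos (by linarith [hy.2]) 2)
  have hh0 : h 0 = γ := by rw [hh]; norm_num
  have hhaγ : γ < h a := by
    have := hmono1 ⟨le_refl 0, ha0.le⟩ ⟨ha0.le, le_refl a⟩ ha0
    rwa [hh0] at this
  have hhab : h b < h a := by
    exact hanti ⟨le_refl a, hab.le⟩ ⟨hab.le, le_refl b⟩ hab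
  refine ⟨a, b, ⟨ha0, ha1⟩, ⟨hb0, hb1⟩, hab, ?_, ?_, ?_, ?_, ?_, hhaγ, hhab, ?_⟩
  · rw [hderiv a ha1, hGa, zero_div]
  · rw [hderiv b hb1, hGb, zero_div]
  · intro y hy
    rw [hderiv y ((hy.2.trans ha1))]
    exact div_pos (hGposlow y hy.1 hy.2) (pow_pos (by linarith [hy.2.trans ha1]) 2)
  · intro y hy
    rw [hderiv y (hy.2.trans hb1)]
    exact div_neg_of_neg_of_pos (hGneg y hy.1 hy.2) (pow_pos (by linarith [hy.2.trans hb1]) 2)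
  · intro y hy
    rw [hderiv y hy.2]
    exact div_pos (hGposhigh y hy.1 hy.2.le) (pow_pos (by linarith [hy.2]) 2)
  -- the C₂ part
  intro C₂ hC2l hC2r
  have hγC2 : γ < C₂ := lt_of_le_of_lt (le_max_left _ _) hC2l
  have hbC2 : h b < C₂ := lt_of_le_of_lt (le_max_right _ _) hC2l
  -- z₁
  obtain ⟨z₁, hz₁Ioo, hz₁⟩ : ∃ z ∈ Set.Ioo 0 a, h z = C₂ := by
    have := intermediate_value_Ioo ha0.le (hcont.mono hsub1)
    have h0 : C₂ ∈ Set.Ioo (h 0) (h a) := ⟨by rwa [hh0], hC2r⟩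
    obtain ⟨z, hz, hzv⟩ := this h0
    exact ⟨z, hz, hzv⟩
  obtain ⟨z₂, hz₂Ioo, hz₂⟩ : ∃ z ∈ Set.Ioo a b, h z = C₂ := by
    have := intermediate_value_Ioo' hab.le (hcont.mono hsub2)
    have h0 : C₂ ∈ Set.Ioo (h b) (h a) := ⟨hbC2, hC2r⟩
    obtain ⟨z, hz, hzv⟩ := this h0
    exact ⟨z, hz, hzv⟩
  -- y₀ with large h value
  have habs3 : (0:ℝ) ≤ |C₃| := abs_nonneg C₃
  set M : ℝ := C₂ + |C₃| + C₄ + 1 with hMdef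
  have hMpos : 0 < M := by rw [hMdef]; linarith
  set ε : ℝ := min ((1 - b)/2) (γ / M) with hεdef
  have hεpos : 0 < ε := lt_min (by linarith) (div_pos hγ hMpos)
  set y₀ : ℝ := 1 - ε with hy₀def
  have hεb : ε < 1 - b := lt_of_le_of_lt (min_le_left _ _) (by linarith)
  have hby₀ : b < y₀ := by rw [hy₀def]; linarith
  have hy₀1 : y₀ < 1 := by rw [hy₀def]; linarith
  have hy₀0 : 0 < y₀ := hb0.trans hby₀
  have hy₀C2 : C₂ < h y₀ := by
    have hγε : M ≤ γ / ε := by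
      rw [le_div_iff₀ hεpos]
      have : ε ≤ γ / M := min_le_right _ _
      calc M * ε ≤ M * (γ / M) := by
            apply mul_le_mul_of_nonneg_left this hMpos.le
        _ = γ := by field_simp
    have e1 : 1 - y₀ = ε := by rw [hy₀def]; ring
    rw [hh, e1]
    have hb3 : C₃ * y₀ ≤ |C₃| := by
      have h1 := mul_le_mul_of_nonneg_right (le_abs_self C₃) hy₀0.le
      have h2 : |C₃| * y₀ ≤ |C₃| := mul_le_of_le_one_right (abs_nonneg C₃) hy₀1.le
      linarith
    have hb4 : C₄ * y₀ ^ 2 ≤ C₄ :=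
      mul_le_of_le_one_right hC4.le (pow_le_one₀ hy₀0.le hy₀1.le)
    rw [hMdef] at hγε
    clear_value y₀ ε M
    linarith
  obtain ⟨z₃, hz₃Ioo, hz₃⟩ : ∃ z ∈ Set.Ioo b y₀, h z = C₂ := by
    have hsub4 : Set.Icc b y₀ ⊆ Set.Iio 1 := fun y hy => lt_of_le_of_lt hy.2 hy₀1
    have := intermediate_value_Ioo hby₀.le (hcont.mono hsub4)
    have h0 : C₂ ∈ Set.Ioo (h b) (h y₀) := ⟨hbC2, hy₀C2⟩
    obtain ⟨z, hz, hzv⟩ := this h0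
    exact ⟨z, hz, hzv⟩
  have hz₁0 : 0 < z₁ := hz₁Ioo.1
  have hz₁a : z₁ < a := hz₁Ioo.2
  have hz₂a : a < z₂ := hz₂Ioo.1
  have hz₂b : z₂ < b := hz₂Ioo.2
  have hz₃b : b < z₃ := hz₃Ioo.1
  have hz₃1 : z₃ < 1 := hz₃Ioo.2.trans hy₀1
  have hz₁1 : z₁ < 1 := hz₁a.trans ha1
  have hz₂0 : 0 < z₂ := hz₁0.trans (hz₁a.trans hz₂a)
  have hz₂1 : z₂ < 1 := hz₂b.trans hb1
  have hz₃0 : 0 < z₃ := hz₂0.trans (hz₂b.trans hz₃b)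
  -- f zeros characterisation
  have hfzero : ∀ y, y < 1 → h y = C₂ → f C₂ y = 0 := by
    intro y hy hyC
    have hne : (1:ℝ) - y ≠ 0 := ne_of_gt (by linarith)
    have e : C₂ = γ / (1 - y) - C₃ * y - C₄ * y ^ 2 := by rw [← hh y, hyC]
    rw [hf, e]
    field_simp
    ring
  have hfzero' : ∀ y, 0 < y → y < 1 → f C₂ y = 0 → h y = C₂ := by
    intro y h0 h1e hfy
    have hne : (1:ℝ) - y ≠ 0 := ne_of_gt (by linarith)
    rw [hf] at hfy
    have hq : y * ((C₂ - γ) + (C₃ - C₂)*y + (C₄ - C₃)*y^2 - C₄*y^3) = 0 := by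
      linear_combination hfy
    have hQ : (C₂ - γ) + (C₃ - C₂)*y + (C₄ - C₃)*y^2 - C₄*y^3 = 0 :=
      (mul_eq_zero.1 hq).resolve_left (ne_of_gt h0)
    rw [hh]
    field_simp
    linear_combination -hQ
  -- f derivative
  have hfd : ∀ y, HasDerivAt (f C₂)
      ((C₂ - γ) + 2*(C₃ - C₂)*y + 3*(C₄ - C₃)*y^2 - 4*C₄*y^3) y := by
    intro y
    have e : f C₂ = fun y => (C₂ - γ) * y + (C₃ - C₂) * y ^ 2 + (C₄ - C₃) * y ^ 3 - C₄ * y ^ 4 :=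
      funext (hf C₂)
    rw [e]
    have d1 : HasDerivAt (fun y:ℝ => (C₂ - γ) * y) (C₂ - γ) y := by
      simpa using (hasDerivAt_id y).const_mul (C₂ - γ)
    have d2 := (hasDerivAt_pow 2 y).const_mul (C₃ - C₂)
    have d3 := (hasDerivAt_pow 3 y).const_mul (C₄ - C₃)
    have d4 := (hasDerivAt_pow 4 y).const_mul C₄
    have := ((d1.add d2).add d3).sub d4
    refine this.congr_deriv ?_
    simp
    ring
  have hfderiv0 : deriv (f C₂) 0 = C₂ - γ := by
    rw [(hfd 0).deriv]; ring
  -- f' at zeros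
  have key : ∀ z, 0 < z → z < 1 → h z = C₂ → deriv (f C₂) z = -(z * G z) / (1 - z) := by
    intro z h0 h1e hz
    have hne : (1:ℝ) - z ≠ 0 := ne_of_gt (by linarith)
    rw [(hfd z).deriv]
    have e : C₂ = γ / (1 - z) - C₃ * z - C₄ * z ^ 2 := by rw [← hh z, hz]
    rw [e, hGval]
    field_simp
    ring
  have hd₁ : deriv (f C₂) z₁ < 0 := by
    rw [key z₁ hz₁0 hz₁1 hz₁]
    apply div_neg_of_neg_of_pos _ (by linarith)
    exact neg_lt_zero.mpr (mul_pos hz₁0 (hGposlow z₁ hz₁0.le hz₁a))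
  have hd₂ : 0 < deriv (f C₂) z₂ := by
    rw [key z₂ hz₂0 hz₂1 hz₂]
    apply div_pos _ (by linarith)
    exact neg_pos.mpr (mul_neg_of_pos_of_neg hz₂0 (hGneg z₂ hz₂a hz₂b))
  have hd₃ : deriv (f C₂) z₃ < 0 := by
    rw [key z₃ hz₃0 hz₃1 hz₃]
    apply div_neg_of_neg_of_pos _ (by linarith)
    exact neg_lt_zero.mpr (mul_pos hz₃0 (hGposhigh z₃ hz₃b hz₃1.le))
  refine ⟨z₁, z₂, z₃, ⟨hz₁0, hz₁1⟩, ⟨hz₂0, hz₂1⟩, ⟨hz₃0, hz₃1⟩,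
    hz₁a.trans hz₂a, hz₂b.trans hz₃b,
    hfzero z₁ hz₁1 hz₁, hfzero z₂ hz₂1 hz₂, hfzero z₃ hz₃1 hz₃, ?_,
    by rw [hfderiv0]; linarith, hd₁, hd₂, hd₃⟩
  -- uniqueness
  intro y hy hfy
  have hyC : h y = C₂ := hfzero' y hy.1 hy.2 hfy
  rcases lt_trichotomy y a with hlt | heq | hgt
  · left
    exact hmono1.injOn ⟨hy.1.le, hlt.le⟩ ⟨hz₁0.le, hz₁a.le⟩ (hyC.trans hz₁.symm)
  · exfalso; rw [heq] at hyC; rw [hyC] at hC2r; exact lt_irrefl _ hC2r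
  · rcases lt_trichotomy y b with hlt2 | heq2 | hgt2
    · right; left
      exact hanti.injOn ⟨hgt.le, hlt2.le⟩ ⟨hz₂a.le, hz₂b.le⟩ (hyC.trans hz₂.symm)
    · exfalso; rw [heq2] at hyC; rw [hyC] at hbC2; exact lt_irrefl _ hbC2
    · right; right
      exact hmono2.injOn ⟨hgt2.le, hy.2⟩ ⟨hz₃b.le, hz₃1⟩ (hyC.trans hz₃.symm)
end

section
/- For the symmetric two-population SIS model, define λ∥(y) = τ(d₁+d₂) − γ + 2(βh₁ − τ(d₁+d₂))y − 3βh₁y² and λ⊥(y) = τ(d₁−d₂) − γ + 2(βh₁ − τd₁)y − 3βh₁y². Then λ∥(y) − λ⊥(y) = 2τd₂(1−y) for all y. Consequently, if τd₂ ≥ 0 then λ⊥(y) ≤ λ∥(y) for all y ∈ [0,1]; and if τd₂ > 0, y ∈ [0,1) and λ⊥(y) = 0, then λ∥(y) > 0, so any symmetric equilibrium at which the transverse eigenvalue vanishes (a pitchfork point) is linearly unstable (any pitchfork bifurcation of the symmetric branch is subcritical). -/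
/-- For the symmetric two-population SIS model, the parallel and
transverse eigenvalues `λ∥(y) = τ(d₁+d₂) − γ + 2(βh₁ − τ(d₁+d₂))y − 3βh₁y²` and
`λ⊥(y) = τ(d₁−d₂) − γ + 2(βh₁ − τd₁)y − 3βh₁y²` satisfy
`λ∥(y) − λ⊥(y) = 2τd₂(1−y)`. Hence if `τd₂ ≥ 0` then `λ⊥ ≤ λ∥` on `[0,1]`, and if
`τd₂ > 0` then any `y ∈ [0,1)` with `λ⊥(y) = 0` has `λ∥(y) > 0`: any pitchfork point
on the symmetric branch is linearly unstable (subcritical symmetry breaking). -/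
theorem symmetric_eigenvalue_comparison (τ β γ d₁ d₂ h₁ : ℝ)
    (lamPar lamPerp : ℝ → ℝ)
    (hPar : ∀ y : ℝ, lamPar y =
      τ * (d₁ + d₂) - γ + 2 * (β * h₁ - τ * (d₁ + d₂)) * y - 3 * β * h₁ * y ^ 2)
    (hPerp : ∀ y : ℝ, lamPerp y =
      τ * (d₁ - d₂) - γ + 2 * (β * h₁ - τ * d₁) * y - 3 * β * h₁ * y ^ 2) :
    (∀ y : ℝ, lamPar y - lamPerp y = 2 * τ * d₂ * (1 - y)) ∧
    (0 ≤ τ * d₂ → ∀ y ∈ Set.Icc (0 : ℝ) 1, lamPerp y ≤ lamPar y) ∧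
    (0 < τ * d₂ → ∀ y ∈ Set.Ico (0 : ℝ) 1, lamPerp y = 0 → 0 < lamPar y) := by
  have gap : ∀ y, lamPar y - lamPerp y = 2 * (τ * d₂) * (1 - y) := fun y => by
    rw [hPar, hPerp]; ring
  refine ⟨fun y => by rw [gap]; ring, fun hτd y hy => ?_, fun hτd y hy hzero => ?_⟩
  · have := mul_nonneg (mul_nonneg zero_le_two hτd) (sub_nonneg.2 hy.2)
    linarith [gap y]
  · have := mul_pos (mul_pos two_pos hτd) (sub_pos.2 hy.2)
    linarith [gap y]
end

section
/- Consider the symmetric two-population SIS model with real parameters τ, β, γ, d₁, d₂, h₁, and suppose y is a real number satisfying the branch relation τ(d₁+d₂)(1−y) = γ − βh₁y(1−y). Then the transverse eigenvalue λ⊥(y) = τ(d₁−d₂) − γ + 2(βh₁ − τd₁)y − 3βh₁y² satisfies the identity λ⊥(y)·(d₁+d₂)(1−y) = −(2γd₂ + (d₁−d₂)γy − (d₁+3d₂)βh₁y(1−y)²). In particular, if d₁+d₂ > 0 and y ∈ (0,1), then λ⊥(y) = 0 (a pitchfork/symmetry-breaking point on the symmetric branch) if and only if 2γd₂ + (d₁−d₂)γy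 − (d₁+3d₂)βh₁y(1−y)² = 0. -/
/-!
The `τ`-terms of `λ⊥(y)` are `τ((d₁ − d₂) − 2d₁y)`, so after multiplying by `(d₁ + d₂)(1 − y)`
they become `((d₁ − d₂) − 2d₁y) · τ(d₁ + d₂)(1 − y)`, and the branch relation replaces the last
factor by `γ − βh₁y(1 − y)`; what remains is a polynomial identity. For `d₁ + d₂ > 0` and
`y < 1` the factor `(d₁ + d₂)(1 − y)` is nonzero, so `λ⊥(y)` vanishes exactly when the
right-hand side does.
-/

theorem transverse_eigenvalue_mul_eq_of_branch {τ β γ d₁ d₂ h₁ y : ℝ}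
    (hbranch : τ * (d₁ + d₂) * (1 - y) = γ - β * h₁ * y * (1 - y)) :
    (τ * (d₁ - d₂) - γ + 2 * (β * h₁ - τ * d₁) * y - 3 * β * h₁ * y ^ 2) * ((d₁ + d₂) * (1 - y)) =
      -(2 * γ * d₂ + (d₁ - d₂) * γ * y - (d₁ + 3 * d₂) * β * h₁ * y * (1 - y) ^ 2) := by
  linear_combination ((d₁ - d₂) - 2 * d₁ * y) * hbranch

/-- On the nontrivial symmetric branch
`τ(d₁+d₂)(1−y) = γ − βh₁y(1−y)` of the symmetric two-population SIS model, the
transverse eigenvalue `λ⊥(y) = τ(d₁−d₂) − γ + 2(βh₁ − τd₁)y − 3βh₁y²` satisfies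
`λ⊥(y)·(d₁+d₂)(1−y) = −(2γd₂ + (d₁−d₂)γy − (d₁+3d₂)βh₁y(1−y)²)`; in particular,
if `d₁+d₂ > 0` and `y ∈ (0,1)`, then `λ⊥(y) = 0` (a pitchfork point) iff
`2γd₂ + (d₁−d₂)γy − (d₁+3d₂)βh₁y(1−y)² = 0`. -/
theorem symmetric_branch_pitchfork_condition (τ β γ d₁ d₂ h₁ : ℝ)
    (lamPerp : ℝ → ℝ)
    (hPerp : ∀ z : ℝ, lamPerp z =
      τ * (d₁ - d₂) - γ + 2 * (β * h₁ - τ * d₁) * z - 3 * β * h₁ * z ^ 2)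
    (y : ℝ)
    (hbranch : τ * (d₁ + d₂) * (1 - y) = γ - β * h₁ * y * (1 - y)) :
    lamPerp y * ((d₁ + d₂) * (1 - y)) =
      -(2 * γ * d₂ + (d₁ - d₂) * γ * y - (d₁ + 3 * d₂) * β * h₁ * y * (1 - y) ^ 2) ∧
    (0 < d₁ + d₂ → y ∈ Set.Ioo (0 : ℝ) 1 →
      (lamPerp y = 0 ↔
        2 * γ * d₂ + (d₁ - d₂) * γ * y - (d₁ + 3 * d₂) * β * h₁ * y * (1 - y) ^ 2 = 0)) := by
  have key := hPerp y ▸ transverse_eigenvalue_mul_eq_of_branch hbranch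
  refine ⟨key, fun hd hy => ?_⟩
  have hfactor : (d₁ + d₂) * (1 - y) ≠ 0 := (mul_pos hd (sub_pos.mpr hy.2)).ne'
  rw [← mul_eq_zero_iff_right hfactor, key, neg_eq_zero]
end

section
/- Let γ > 0, d₂ > 0, d₁ ≥ 0 and B be real numbers, and define f(y) = 2γd₂ + (d₁−d₂)γy − (d₁+3d₂)By(1−y)². If y ∈ (0,1) satisfies f(y) = 0 and f′(y) = 0 (a tangency of the pitchfork-condition curve, i.e., the boundary of existence of pitchfork points), then d₁y² = d₂(1−3y+y²) and B(1−3y+4y²)(1−y) = γ; equivalently d₁/d₂ = (1−3y+y²)/y² and B = γ/((1−3y+4y²)(1−y)). -/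
/-- Let `γ > 0`, `d₂ > 0`, `d₁ ≥ 0`, `B` real and
`f(y) = 2γd₂ + (d₁−d₂)γy − (d₁+3d₂)By(1−y)²`. At a double root `y ∈ (0,1)`
(`f(y) = 0` and `f′(y) = 0`, i.e., at the boundary of existence of pitchfork
points), we have `d₁y² = d₂(1−3y+y²)` and `B(1−3y+4y²)(1−y) = γ`; equivalently
`d₁/d₂ = (1−3y+y²)/y²` and `B = γ/((1−3y+4y²)(1−y))`. -/
theorem pitchfork_boundary_parametrization (γ d₁ d₂ B : ℝ)
    (hγ : 0 < γ) (hd₂ : 0 < d₂) (hd₁ : 0 ≤ d₁)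
    (f : ℝ → ℝ)
    (hf : ∀ y : ℝ, f y = 2 * γ * d₂ + (d₁ - d₂) * γ * y
      - (d₁ + 3 * d₂) * B * y * (1 - y) ^ 2)
    (y : ℝ) (hy : y ∈ Set.Ioo (0 : ℝ) 1)
    (hroot : f y = 0) (hdroot : deriv f y = 0) :
    d₁ * y ^ 2 = d₂ * (1 - 3 * y + y ^ 2) ∧
    B * (1 - 3 * y + 4 * y ^ 2) * (1 - y) = γ ∧
    d₁ / d₂ = (1 - 3 * y + y ^ 2) / y ^ 2 ∧
    B = γ / ((1 - 3 * y + 4 * y ^ 2) * (1 - y)) := by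
  obtain ⟨hy0, hy1⟩ := hy
  have hF : f = fun x : ℝ => 2 * γ * d₂ + (d₁ - d₂) * γ * x
      - (d₁ + 3 * d₂) * B * (x * (1 - x) ^ 2) := by
    funext x; rw [hf]; ring
  -- compute the derivative
  have h1 : HasDerivAt (fun x : ℝ => (1 : ℝ) - x) (-1) y := by
    simpa using (hasDerivAt_id y).const_sub 1
  have h2 : HasDerivAt (fun x : ℝ => (1 - x) ^ 2) (2 * (1 - y) ^ 1 * (-1)) y := h1.pow 2
  have h0 : HasDerivAt (fun x : ℝ => x * (1 - x) ^ 2)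
      (1 * (1 - y) ^ 2 + y * (2 * (1 - y) ^ 1 * (-1))) y := (hasDerivAt_id y).mul h2
  have hlin : HasDerivAt (fun x : ℝ => 2 * γ * d₂ + (d₁ - d₂) * γ * x) ((d₁ - d₂) * γ * 1) y :=
    ((hasDerivAt_id y).const_mul ((d₁ - d₂) * γ)).const_add _
  have hFull := hlin.sub (h0.const_mul ((d₁ + 3 * d₂) * B))
  have hE2 : (d₁ - d₂) * γ - (d₁ + 3 * d₂) * B * ((1 - y) * (1 - 3 * y)) = 0 := by
    have hd := hFull.deriv
    rw [show ((fun x : ℝ => 2 * γ * d₂ + (d₁ - d₂) * γ * x) - fun y => (d₁ + 3 * d₂) * B * (y * (1 - y) ^ 2)) = f from by rw [hF]; funext x; rfl] at hd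
    rw [hdroot] at hd
    linear_combination -hd
  have hE1 : 2 * γ * d₂ + (d₁ - d₂) * γ * y
      - (d₁ + 3 * d₂) * B * y * (1 - y) ^ 2 = 0 := by rw [← hf]; exact hroot
  have hkey : γ * d₂ = (d₁ + 3 * d₂) * B * y ^ 2 * (1 - y) := by
    linear_combination (1/2) * hE1 - (y/2) * hE2
  have hg1 : d₁ * y ^ 2 = d₂ * (1 - 3 * y + y ^ 2) := by
    have := mul_left_cancel₀ (ne_of_gt hγ)
      (show γ * (d₁ * y ^ 2) = γ * (d₂ * (1 - 3 * y + y ^ 2)) by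
        linear_combination y ^ 2 * hE2 + (3 * y - 1) * hkey)
    exact this
  have hg2 : B * (1 - 3 * y + 4 * y ^ 2) * (1 - y) = γ := by
    refine mul_left_cancel₀ (ne_of_gt hd₂) ?_
    linear_combination (-(B * (1 - y))) * hg1 - hkey
  have hyne : y ≠ 0 := ne_of_gt hy0
  have hquad : (0 : ℝ) < 1 - 3 * y + 4 * y ^ 2 := by nlinarith [sq_nonneg (8 * y - 3)]
  have h1y : (0 : ℝ) < 1 - y := by linarith
  refine ⟨hg1, hg2, ?_, ?_⟩
  · field_simp
    linear_combination hg1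
  · rw [eq_div_iff (mul_pos hquad h1y).ne']
    linear_combination hg2
end

section
/- Consider the symmetric two-population SIS model with real parameters τ, β, γ, d₁, d₂, h₁. Suppose (y₁, y₂) is an equilibrium, i.e., τ(1−y₁)(d₁y₁ + d₂y₂) + βh₁(1−y₁)y₁² = γy₁ and τ(1−y₂)(d₂y₁ + d₁y₂) + βh₁(1−y₂)y₂² = γy₂, and suppose y₁ ≠ y₂. Then γ(d₂(y₁+y₂) + (d₁−d₂)y₁y₂) = βh₁((d₁−d₂)y₁y₂ + d₂(y₁+y₂)²)(1−y₁)(1−y₂). -/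
/-- If `(y₁,y₂)` is a nonsymmetric equilibrium (`y₁ ≠ y₂`) of the
symmetric two-population SIS model, then, eliminating `τ`,
`γ(d₂(y₁+y₂) + (d₁−d₂)y₁y₂) = βh₁((d₁−d₂)y₁y₂ + d₂(y₁+y₂)²)(1−y₁)(1−y₂)`. -/
theorem symmetric_nonsymmetric_equilibrium_relation (τ β γ d₁ d₂ h₁ : ℝ)
    (y₁ y₂ : ℝ)
    (heq₁ : τ * (1 - y₁) * (d₁ * y₁ + d₂ * y₂) + β * h₁ * (1 - y₁) * y₁ ^ 2 = γ * y₁)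
    (heq₂ : τ * (1 - y₂) * (d₂ * y₁ + d₁ * y₂) + β * h₁ * (1 - y₂) * y₂ ^ 2 = γ * y₂)
    (hne : y₁ ≠ y₂) :
    γ * (d₂ * (y₁ + y₂) + (d₁ - d₂) * y₁ * y₂) =
      β * h₁ * ((d₁ - d₂) * y₁ * y₂ + d₂ * (y₁ + y₂) ^ 2) * (1 - y₁) * (1 - y₂) := by
  refine mul_left_cancel₀ (sub_ne_zero.mpr hne.symm) ?_
  -- Weighting each equation by the other's coefficient of `τ` eliminates `τ`;
  -- the difference is `y₂ - y₁` times the claimed identity.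
  linear_combination ((1 - y₂) * (d₂ * y₁ + d₁ * y₂)) * heq₁ -
    ((1 - y₁) * (d₁ * y₁ + d₂ * y₂)) * heq₂
end
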